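/- Fix c ∈ ℝ with c ≠ 0 and c ≠ −1, and for h near c (h ≠ c) define x(h) = (c − h)(h + 1)/(c − 2h − h²)² and y(h) = (c − 2h − h²)²(c − h − h²)/(c − h)². Then |Q(x(h), y(h))| tends to +∞ as h tends to c; i.e., Q has a pole along the level curve P = c as h → c. -/

import Mathlib

open Filter Topology

/-- `t = xy − 1`. -/
noncomputable def tF (x y : ℝ) : ℝ := x * y - 1

/-- `h = t(xt + 1)`. -/
noncomputable def hF (x y : ℝ) : ℝ := tF x y * (x * tF x y + 1)

/-- `f = (xt + 1)²(t² + y)`. -/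
noncomputable def fF (x y : ℝ) : ℝ := (x * tF x y + 1) ^ 2 * (tF x y ^ 2 + y)

/-- The auxiliary polynomial `u(f,h)`. -/
noncomputable def uF (f h : ℝ) : ℝ :=
  170 * f * h + 91 * h ^ 2 + 195 * f * h ^ 2 + 69 * h ^ 3 + 75 * f * h ^ 3 + (75 / 4) * h ^ 4

/-- `Q = −t² − 6th(h + 1) − u(f,h)`. -/
noncomputable def QF (x y : ℝ) : ℝ :=
  -tF x y ^ 2 - 6 * tF x y * hF x y * (hF x y + 1) - uF (fF x y) (hF x y)

/-!
Along the curve, `hF = h` and `fF = c - h`, while `t = n(h) / (c - h)` with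
`n(h) = (h + 1)(c - h - h²) - (c - h)`. Hence `(c - h)² Q` is a polynomial in `h` whose value
at `h = c` is `-n(c)² = -(c²(c + 1))² ≠ 0`, so `|Q|` blows up like `(c - h)⁻²`.
-/

theorem Filter.Tendsto.abs_atTop_of_mul_tendsto {α : Type*} {l : Filter α} {φ g : α → ℝ}
    {L : ℝ} (hφ : Tendsto φ l (𝓝 0)) (hφ0 : ∀ᶠ a in l, φ a ≠ 0) (hL : L ≠ 0)
    (hφg : Tendsto (fun a => φ a * g a) l (𝓝 L)) :
    Tendsto (fun a => |g a|) l atTop := by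
  have hφ_pos : Tendsto (fun a => |φ a|) l (𝓝[>] 0) :=
    tendsto_nhdsWithin_iff.2
      ⟨by simpa using hφ.abs, hφ0.mono fun _ ha => abs_pos.2 ha⟩
  refine (hφ_pos.inv_tendsto_nhdsGT_zero.atTop_mul_pos (abs_pos.2 hL) hφg.abs).congr' ?_
  filter_upwards [hφ0] with a ha
  rw [Pi.inv_apply, abs_mul, ← mul_assoc, inv_mul_cancel₀ (abs_ne_zero.2 ha), one_mul]

section LevelCurve

variable {c h : ℝ}

noncomputable def curveX (c h : ℝ) : ℝ := (c - h) * (h + 1) / (c - 2 * h - h ^ 2) ^ 2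

noncomputable def curveY (c h : ℝ) : ℝ :=
  (c - 2 * h - h ^ 2) ^ 2 * (c - h - h ^ 2) / (c - h) ^ 2

noncomputable def curveTNum (c h : ℝ) : ℝ := (h + 1) * (c - h - h ^ 2) - (c - h)

theorem tF_curve (hD : c - 2 * h - h ^ 2 ≠ 0) (hch : c - h ≠ 0) :
    tF (curveX c h) (curveY c h) = curveTNum c h / (c - h) := by
  have hD' : c - h * 2 - h ^ 2 ≠ 0 := by rwa [mul_comm h 2]
  unfold tF curveX curveY curveTNum
  field_simp

theorem hF_curve (hD : c - 2 * h - h ^ 2 ≠ 0) (hch : c - h ≠ 0) :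
    hF (curveX c h) (curveY c h) = h := by
  have hD' : c - h * 2 - h ^ 2 ≠ 0 := by rwa [mul_comm h 2]
  rw [hF, tF_curve hD hch, curveX, curveTNum]
  field_simp
  ring

theorem fF_curve (hD : c - 2 * h - h ^ 2 ≠ 0) (hch : c - h ≠ 0) :
    fF (curveX c h) (curveY c h) = c - h := by
  have hD' : c - h * 2 - h ^ 2 ≠ 0 := by rwa [mul_comm h 2]
  rw [fF, tF_curve hD hch, curveX, curveY, curveTNum]
  field_simp
  ring

theorem sq_mul_QF_curve (hD : c - 2 * h - h ^ 2 ≠ 0) (hch : c - h ≠ 0) :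
    (c - h) ^ 2 * QF (curveX c h) (curveY c h) =
      -curveTNum c h ^ 2 - 6 * curveTNum c h * (c - h) * h * (h + 1)
        - (c - h) ^ 2 * uF (c - h) h := by
  rw [QF, tF_curve hD hch, hF_curve hD hch, fF_curve hD hch]
  field_simp

theorem tendsto_sq_mul_QF_curve (hc0 : c ≠ 0) (hc1 : c + 1 ≠ 0) :
    Tendsto (fun h => (c - h) ^ 2 * QF (curveX c h) (curveY c h)) (𝓝[≠] c)
      (𝓝 (-(c ^ 2 * (c + 1)) ^ 2)) := by
  have hD : ∀ᶠ h in 𝓝[≠] c, c - 2 * h - h ^ 2 ≠ 0 := by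
    refine (ContinuousAt.eventually_ne (by fun_prop) ?_).filter_mono nhdsWithin_le_nhds
    have : c - 2 * c - c ^ 2 = -(c * (c + 1)) := by ring
    simpa [this] using And.intro hc0 hc1
  have hch : ∀ᶠ h in 𝓝[≠] c, c - h ≠ 0 :=
    eventually_nhdsWithin_of_forall fun h hh => sub_ne_zero.2 (Ne.symm hh)
  have hpoly : Continuous fun h => -curveTNum c h ^ 2 - 6 * curveTNum c h * (c - h) * h * (h + 1)
      - (c - h) ^ 2 * uF (c - h) h := by
    unfold curveTNum uF
    fun_prop
  refine (hpoly.continuousAt.continuousWithinAt.tendsto.congr' ?_).trans (le_of_eq ?_)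
  · filter_upwards [hD, hch] with h hDh hchh
    exact (sq_mul_QF_curve hDh hchh).symm
  · simp only [curveTNum, sub_self, uF]
    ring_nf

end LevelCurve

/-- Along the level curve `P = c` (for `c ≠ 0, −1`), `Q` has a pole as the
parameter `h` tends to `c`. -/
theorem pinchuk_Q_pole_along_level_curve (c : ℝ) (hc0 : c ≠ 0) (hc1 : c ≠ -1) :
    Tendsto
      (fun h : ℝ =>
        |QF ((c - h) * (h + 1) / (c - 2 * h - h ^ 2) ^ 2)
            ((c - 2 * h - h ^ 2) ^ 2 * (c - h - h ^ 2) / (c - h) ^ 2)|)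
      (nhdsWithin c {c}ᶜ) atTop := by
  change Tendsto (fun h => |QF (curveX c h) (curveY c h)|) (𝓝[≠] c) atTop
  have hc1' : c + 1 ≠ 0 := fun h => hc1 (eq_neg_of_add_eq_zero_left h)
  have hsq : Tendsto (fun h : ℝ => (c - h) ^ 2) (𝓝[≠] c) (𝓝 0) := by
    have : Tendsto (fun h : ℝ => (c - h) ^ 2) (𝓝 c) (𝓝 ((c - c) ^ 2)) :=
      (by fun_prop : Continuous fun h : ℝ => (c - h) ^ 2).continuousAt.tendsto
    simpa using this.mono_left nhdsWithin_le_nhds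
  have hsq_ne : ∀ᶠ h in 𝓝[≠] c, (c - h) ^ 2 ≠ 0 :=
    eventually_nhdsWithin_of_forall fun h hh => pow_ne_zero 2 (sub_ne_zero.2 (Ne.symm hh))
  exact hsq.abs_atTop_of_mul_tendsto hsq_ne
    (neg_ne_zero.2 (pow_ne_zero 2 (mul_ne_zero (pow_ne_zero 2 hc0) hc1')))
    (tendsto_sq_mul_QF_curve hc0 hc1')
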